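/- arXiv:2602.06068 — 2 statements merged into one kernel-verified Lean document; each statement's English description precedes it below -/
import Mathlib

section
/- Let d, n be positive integers and set U_d(n) = ∑_{k=1}^n (4^k / C(2k,k))·k^d and c_{d,j} = C(d+1, j+1) + C(d, j+1). Then (2d+3)·U_d(n) = (n+1)·2^{2n+1}·n^d / C(2n,n) - ∑_{j=1}^d (-1)^j·c_{d,j}·U_{d-j}(n). -/
open Finset BigOperators

def U (d n : ℕ) : ℚ := ∑ k ∈ Finset.Icc 1 n, (4:ℚ)^k / (Nat.choose (2*k) k) * k^d

def c (d j : ℕ) : ℚ := Nat.choose (d+1) (j+1) + Nat.choose d (j+1)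

noncomputable def A (k : ℕ) : ℚ := (4:ℚ)^k / (Nat.choose (2*k) k)

lemma binom_range (m : ℕ) (x : ℚ) :
    ∑ j ∈ Finset.range (m+1), (-1:ℚ)^j * (Nat.choose m j) * x^(m-j) = (x-1)^m := by
  rw [← Finset.sum_range_reflect]
  have h : (x - 1)^m = (x + (-1))^m := by ring_nf
  rw [h, add_pow]
  simp only [Nat.add_sub_cancel]
  apply Finset.sum_congr rfl
  intro j hj
  rw [Finset.mem_range] at hj
  have hjm : j ≤ m := by omega
  rw [Nat.sub_sub_self hjm, Nat.choose_symm hjm]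
  ring

lemma binom_Icc (m : ℕ) (x : ℚ) :
    ∑ j ∈ Finset.Icc 1 m, (-1:ℚ)^j * (Nat.choose m j) * x^(m-j) = (x-1)^m - x^m := by
  have h0 : Finset.range (m+1) = Finset.Icc 0 m := by
    rw [← Nat.Ico_zero_eq_range, Finset.Ico_add_one_right_eq_Icc]
  have h1 : Finset.Icc 0 m = Finset.cons 0 (Finset.Ioc 0 m) (by simp) :=
    Finset.Icc_eq_cons_Ioc (Nat.zero_le m)
  have h2 : Finset.Ioc 0 m = Finset.Icc 1 m := by
    ext j; simp [Nat.lt_iff_add_one_le]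
  have := binom_range m x
  rw [h0, h1, Finset.sum_cons, h2] at this
  simp at this
  linarith [this]

lemma poly (d : ℕ) (x : ℚ) :
    ∑ j ∈ Finset.Icc 1 d, (-1:ℚ)^j * c d j * x^(d-j)
      = 2*x^(d+1) - (2*d+1)*x^d - (2*x-1)*(x-1)^d := by
  induction d with
  | zero => simp
  | succ d ih =>
    have hsplit : ∀ f : ℕ → ℚ, ∑ j ∈ Finset.Icc 1 (d+1), f j
        = ∑ j ∈ Finset.Icc 1 d, f j + f (d+1) := fun f =>
      Finset.sum_Icc_succ_top (by omega) f
    have crec : ∀ j : ℕ, c (d+1) j = c d j + (Nat.choose (d+1) j + Nat.choose d j) := by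
      intro j
      simp only [c, Nat.choose_succ_succ (d+1) j, Nat.choose_succ_succ d j]
      push_cast; ring
    calc ∑ j ∈ Finset.Icc 1 (d+1), (-1:ℚ)^j * c (d+1) j * x^(d+1-j)
        = ∑ j ∈ Finset.Icc 1 (d+1), ((-1:ℚ)^j * c d j * x^(d+1-j)
            + ((-1:ℚ)^j * (Nat.choose (d+1) j) * x^(d+1-j)
              + (-1:ℚ)^j * (Nat.choose d j) * x^(d+1-j))) := by
          apply Finset.sum_congr rfl; intro j hj; rw [crec j]; ring
      _ = (∑ j ∈ Finset.Icc 1 (d+1), (-1:ℚ)^j * c d j * x^(d+1-j))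
            + (∑ j ∈ Finset.Icc 1 (d+1), (-1:ℚ)^j * (Nat.choose (d+1) j) * x^(d+1-j))
            + (∑ j ∈ Finset.Icc 1 (d+1), (-1:ℚ)^j * (Nat.choose d j) * x^(d+1-j)) := by
          rw [Finset.sum_add_distrib, Finset.sum_add_distrib]; ring
      _ = (x * ∑ j ∈ Finset.Icc 1 d, (-1:ℚ)^j * c d j * x^(d-j))
            + ((x-1)^(d+1) - x^(d+1))
            + (x * ((x-1)^d - x^d)) := by
          congr 1
          · congr 1
            · rw [hsplit]
              have hz : c d (d+1) = 0 := by
                have e1 : Nat.choose (d+1) (d+2) = 0 := Nat.choose_eq_zero_of_lt (by omega)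
                have e2 : Nat.choose d (d+2) = 0 := Nat.choose_eq_zero_of_lt (by omega)
                simp [c, e1, e2]
              rw [hz, Finset.mul_sum]
              simp only [mul_zero, zero_mul, add_zero]
              apply Finset.sum_congr rfl
              intro j hj
              rw [Finset.mem_Icc] at hj
              have : d + 1 - j = (d - j) + 1 := by omega
              rw [this, pow_succ]
              ring
            · exact binom_Icc (d+1) x
          · rw [hsplit]
            have hz : ((Nat.choose d (d+1)) : ℚ) = 0 := by
              have e1 : Nat.choose d (d+1) = 0 := Nat.choose_eq_zero_of_lt (by omega)
              simp [e1]
            rw [hz]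
            simp only [mul_zero, zero_mul, add_zero]
            rw [← binom_Icc d x, Finset.mul_sum]
            apply Finset.sum_congr rfl
            intro j hj
            rw [Finset.mem_Icc] at hj
            have : d + 1 - j = (d - j) + 1 := by omega
            rw [this, pow_succ]
            ring
      _ = 2*x^(d+1+1) - (2*(↑(d+1):ℚ)+1)*x^(d+1) - (2*x-1)*(x-1)^(d+1) := by
          rw [ih]; push_cast; ring

lemma A_pos (k : ℕ) : (0:ℚ) < (Nat.choose (2*k) k) := by
  exact_mod_cast Nat.choose_pos (by omega)

lemma A_ratio (k : ℕ) (hk : 1 ≤ k) :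
    (2*(k:ℚ)-1) * A k = 2*(k:ℚ) * A (k-1) := by
  obtain ⟨m, rfl⟩ : ∃ m, k = m + 1 := ⟨k - 1, by omega⟩
  have hcb := Nat.succ_mul_centralBinom_succ m
  have h1 : Nat.centralBinom (m+1) = Nat.choose (2*(m+1)) (m+1) := rfl
  have h2 : Nat.centralBinom m = Nat.choose (2*m) m := rfl
  rw [h1, h2] at hcb
  have hq : ((m:ℚ)+1) * (Nat.choose (2*(m+1)) (m+1)) = 2 * (2*m+1) * (Nat.choose (2*m) m) := by
    exact_mod_cast hcb
  simp only [A, Nat.add_sub_cancel]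
  have hne1 : ((Nat.choose (2*(m+1)) (m+1)) : ℚ) ≠ 0 := ne_of_gt (A_pos (m+1))
  have hne2 : ((Nat.choose (2*m) m) : ℚ) ≠ 0 := ne_of_gt (A_pos m)
  field_simp
  push_cast
  linear_combination (-2*(4:ℚ)^m) * hq

noncomputable def G (d : ℕ) : ℕ → ℚ := fun k => 2*((k:ℚ)+1)*(k:ℚ)^d * A k

lemma pointwise (d : ℕ) (k : ℕ) (hk : 1 ≤ k) :
    (2*(d:ℚ)+3) * (A k * (k:ℚ)^d)
      + ∑ j ∈ Finset.Icc 1 d, (-1:ℚ)^j * c d j * (A k * (k:ℚ)^(d-j))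
      = G d k - G d (k-1) := by
  have hfac : ∑ j ∈ Finset.Icc 1 d, (-1:ℚ)^j * c d j * (A k * (k:ℚ)^(d-j))
      = A k * ∑ j ∈ Finset.Icc 1 d, (-1:ℚ)^j * c d j * (k:ℚ)^(d-j) := by
    rw [Finset.mul_sum]; apply Finset.sum_congr rfl; intro j hj; ring
  rw [hfac, poly d (k:ℚ)]
  have hratio := A_ratio k hk
  have hcast : ((k-1 : ℕ) : ℚ) = (k:ℚ) - 1 := by
    push_cast [Nat.cast_sub hk]; ring
  simp only [G, hcast]
  linear_combination (-(((k:ℚ)-1)^d)) * hratio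

theorem stmt12 (d n : ℕ) (hd : 0 < d) (hn : 0 < n) :
    (2*(d:ℚ)+3) * U d n =
      ((n:ℚ)+1) * 2^(2*n+1) * (n:ℚ)^d / (Nat.choose (2*n) n)
        - ∑ j ∈ Finset.Icc 1 d, (-1:ℚ)^j * c d j * U (d-j) n := by
  rw [eq_sub_iff_add_eq]
  have hU : ∀ e : ℕ, U e n = ∑ k ∈ Finset.Icc 1 n, A k * (k:ℚ)^e := by
    intro e; apply Finset.sum_congr rfl; intro k hk; rfl
  have hswap : ∑ j ∈ Finset.Icc 1 d, (-1:ℚ)^j * c d j * U (d-j) n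
      = ∑ k ∈ Finset.Icc 1 n, ∑ j ∈ Finset.Icc 1 d, (-1:ℚ)^j * c d j * (A k * (k:ℚ)^(d-j)) := by
    rw [Finset.sum_comm]
    apply Finset.sum_congr rfl
    intro j hj
    rw [hU, Finset.mul_sum]
  rw [hswap, hU, Finset.mul_sum, ← Finset.sum_add_distrib]
  have hpt : ∑ k ∈ Finset.Icc 1 n, ((2*(d:ℚ)+3) * (A k * (k:ℚ)^d)
      + ∑ j ∈ Finset.Icc 1 d, (-1:ℚ)^j * c d j * (A k * (k:ℚ)^(d-j)))
      = ∑ k ∈ Finset.Icc 1 n, (G d k - G d (k-1)) := by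
    apply Finset.sum_congr rfl
    intro k hk
    rw [Finset.mem_Icc] at hk
    exact pointwise d k hk.1
  rw [hpt]
  have htel : ∑ k ∈ Finset.Icc 1 n, (G d k - G d (k-1)) = G d n - G d 0 := by
    rw [← Finset.Ico_add_one_right_eq_Icc, Finset.sum_Ico_eq_sum_range]
    calc ∑ i ∈ Finset.range n, (G d (1+i) - G d (1+i-1))
        = ∑ i ∈ Finset.range n, (G d (i+1) - G d i) := by
          apply Finset.sum_congr rfl
          intro i hi
          rw [show 1+i-1 = i from by omega, add_comm 1 i]
      _ = G d n - G d 0 := Finset.sum_range_sub (G d) n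
  rw [htel]
  have hG0 : G d 0 = 0 := by
    simp [G, zero_pow hd.ne']
  rw [hG0, sub_zero]
  simp only [G, A]
  have h4 : (2:ℚ)^(2*n+1) = 2*4^n := by
    rw [pow_succ, pow_mul]; norm_num; ring
  rw [h4]
  ring
end

section
/- For every positive integer n, ∑_{k=1}^n (4^k / C(2k,k))·k·H_k = (3n+1)(n+1)·2^{2n+1}·H_n/(15·C(2n,n)) - (18n² - 11n + 1)·2^{2n+1}/(225·C(2n,n)) + 2/225. -/
open Finset BigOperators

def H (n : ℕ) : ℚ := ∑ j ∈ Finset.range n, 1/(j+1)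

lemma central_rec (n : ℕ) :
    ((n:ℚ)+1) * (Nat.choose (2*(n+1)) (n+1)) = 2*(2*(n:ℚ)+1) * (Nat.choose (2*n) n) := by
  have h := Nat.succ_mul_centralBinom_succ n
  have : ((n+1) * Nat.centralBinom (n+1) : ℚ) = (2 * (2*n+1) * Nat.centralBinom n : ℕ) := by
    exact_mod_cast congrArg (Nat.cast : ℕ → ℚ) h
  simpa [Nat.centralBinom, Nat.cast_mul, Nat.cast_add] using this

lemma H_succ (n : ℕ) : H (n+1) = H n + 1/((n:ℚ)+1) := by
  simp [H, Finset.sum_range_succ]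

theorem stmt14 (n : ℕ) (hn : 0 < n) :
    ∑ k ∈ Finset.Icc 1 n, (4:ℚ)^k / (Nat.choose (2*k) k) * k * H k =
      (3*(n:ℚ)+1)*((n:ℚ)+1) * 2^(2*n+1) * H n / (15 * (Nat.choose (2*n) n))
        - (18*(n:ℚ)^2 - 11*(n:ℚ) + 1) * 2^(2*n+1) / (225 * (Nat.choose (2*n) n)) + 2/225 := by
  induction n, hn using Nat.le_induction with
  | base => norm_num [H]
  | succ n hn ih =>
    rw [Finset.sum_Icc_succ_top (by omega), ih, H_succ]
    have hc : (Nat.choose (2*n) n : ℚ) ≠ 0 := by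
      exact_mod_cast Nat.choose_pos (by omega) |>.ne'
    have hn1 : ((n:ℚ)+1) ≠ 0 := by positivity
    have h2n1 : (2*(n:ℚ)+1) ≠ 0 := by positivity
    have e1 : (Nat.choose (2*(n+1)) (n+1) : ℚ)
        = 2*(2*(n:ℚ)+1) * (Nat.choose (2*n) n) / ((n:ℚ)+1) := by
      field_simp
      linarith [central_rec n]
    have h4 : (4:ℚ)^(n+1) = 2 * 2^(2*n+1) := by
      rw [pow_succ, show (4:ℚ) = 2^2 by norm_num, ← pow_mul]; ring
    have h2 : (2:ℚ)^(2*(n+1)+1) = 4 * 2^(2*n+1) := by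
      rw [show 2*(n+1)+1 = (2*n+1)+2 by ring, pow_add]; ring
    push_cast
    rw [e1, h4, h2]
    field_simp
    ring
end
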